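/- arXiv:2105.13821 — 6 statements merged into one kernel-verified Lean document; each statement's English description precedes it below -/
import Mathlib

section
/- There is no function a : Fin 3 → Fin 3 → ℤ taking values in {−1, 1} such that the product of each row equals 1, the products of the first and second columns equal 1, and the product of the third column equals −1. (The total product computed by rows is +1 while computed by columns it is −1, a contradiction; this is the Kochen–Specker-type parity obstruction underlying the Peres–Mermin square.) -/
theorem Finset.prod_univ_prod_eq_one_of_forall_prod_eq_one {ι κ M : Type*} [Fintype ι]
    [Fintype κ] [CommMonoid M] {a : ι → κ → M} (h : ∀ i, ∏ j, a i j = 1) :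
    ∏ j, ∏ i, a i j = 1 := by
  rw [Finset.prod_comm]
  exact Finset.prod_eq_one fun i _ => h i

/-- The Kochen–Specker-type parity obstruction underlying the Peres–Mermin
square: there is no ±1-valued assignment to the nine cells such that every
row product and the first two column products equal 1 while the third column
product equals −1. -/
theorem peres_mermin_parity_obstruction :
    ¬ ∃ a : Fin 3 → Fin 3 → ℤ,
      (∀ i j : Fin 3, a i j = 1 ∨ a i j = -1) ∧
      (∀ i : Fin 3, a i 0 * a i 1 * a i 2 = 1) ∧
      (a 0 0 * a 1 0 * a 2 0 = 1) ∧
      (a 0 1 * a 1 1 * a 2 1 = 1) ∧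
      (a 0 2 * a 1 2 * a 2 2 = -1) := by
  rintro ⟨a, -, hrows, hcol0, hcol1, hcol2⟩
  have hcols : ∏ j, ∏ i, a i j = 1 :=
    Finset.prod_univ_prod_eq_one_of_forall_prod_eq_one fun i => by
      simpa only [Fin.prod_univ_three] using hrows i
  rw [Fin.prod_univ_three, Fin.prod_univ_three, Fin.prod_univ_three, Fin.prod_univ_three,
    hcol0, hcol1, hcol2] at hcols
  norm_num at hcols
end

section
/- In the quantum Peres–Mermin square, the product of the three matrices in each row equals the 4×4 identity, the products of the three matrices in the first and second columns equal the 4×4 identity, and the product of the three matrices in the third column equals minus the 4×4 identity: A i 0 * A i 1 * A i 2 = 1 for i = 0,1,2, A 0 j * A 1 j * A 2 j = 1 for j = 0,1, and A 0 2 * A 1 2 * A 2 2 = −1. -/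
open Matrix Kronecker

/-- The Pauli matrix σx. -/
def σx : Matrix (Fin 2) (Fin 2) ℂ := !![0, 1; 1, 0]
/-- The Pauli matrix σy. -/
def σy : Matrix (Fin 2) (Fin 2) ℂ := !![0, -Complex.I; Complex.I, 0]
/-- The Pauli matrix σz. -/
def σz : Matrix (Fin 2) (Fin 2) ℂ := !![1, 0; 0, -1]

/-- Kronecker product of two 2×2 matrices, reindexed as a 4×4 matrix. -/
def kron (M N : Matrix (Fin 2) (Fin 2) ℂ) : Matrix (Fin 4) (Fin 4) ℂ :=
  Matrix.reindex finProdFinEquiv finProdFinEquiv (M ⊗ₖ N)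

/-- The Peres–Mermin table of two-qubit observables. -/
def PM : Fin 3 → Fin 3 → Matrix (Fin 4) (Fin 4) ℂ :=
  ![![kron σx 1, kron 1 σx, kron σx σx],
    ![kron 1 σz, kron σz 1, kron σz σz],
    ![kron σx σz, kron σz σx, kron σy σy]]

/-!
By the mixed-product rule `(A ⊗ B)(C ⊗ D) = AC ⊗ BD`, each line product of the square is the
Kronecker product of two products of Pauli matrices. These reduce to `σx² = σz² = 1`,
`σx σz σy = -i` and `σz σx σy = i`; only the third column pairs `-i` with `-i`, giving `-1`.
-/

lemma kron_mul_kron (A B C D : Matrix (Fin 2) (Fin 2) ℂ) :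
    kron A B * kron C D = kron (A * C) (B * D) := by
  simp only [kron, reindex_apply, submatrix_mul_equiv, mul_kronecker_mul]

lemma kron_one_one : kron 1 1 = 1 := by
  simp only [kron, reindex_apply, one_kronecker_one, submatrix_one_equiv]

lemma kron_smul_smul (a b : ℂ) (M N : Matrix (Fin 2) (Fin 2) ℂ) :
    kron (a • M) (b • N) = (a * b) • kron M N := by
  simp only [kron, reindex_apply, smul_kronecker, kronecker_smul, smul_smul, mul_comm]
  rfl

lemma kron_neg_left (M N : Matrix (Fin 2) (Fin 2) ℂ) : kron (-M) N = -kron M N := by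
  simpa using kron_smul_smul (-1) 1 M N

lemma kron_neg_right (M N : Matrix (Fin 2) (Fin 2) ℂ) : kron M (-N) = -kron M N := by
  simpa using kron_smul_smul 1 (-1) M N

lemma σx_mul_σx : σx * σx = 1 := by
  simp [σx, one_fin_two]

lemma σz_mul_σz : σz * σz = 1 := by
  simp [σz, one_fin_two]

lemma σx_mul_σz_mul_σy : σx * σz * σy = (-Complex.I) • 1 := by
  simp [σx, σy, σz, one_fin_two]

lemma σz_mul_σx_mul_σy : σz * σx * σy = Complex.I • 1 := by
  simp [σx, σy, σz, one_fin_two]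

/-- In the quantum Peres–Mermin square, each row product and the first two
column products equal the identity, while the third column product equals
minus the identity. -/
theorem peres_mermin_products :
    (∀ i : Fin 3, PM i 0 * PM i 1 * PM i 2 = 1) ∧
    (PM 0 0 * PM 1 0 * PM 2 0 = 1) ∧
    (PM 0 1 * PM 1 1 * PM 2 1 = 1) ∧
    (PM 0 2 * PM 1 2 * PM 2 2 = -1) := by
  refine ⟨fun i => ?_, ?_, ?_, ?_⟩
  on_goal 1 => fin_cases i
  all_goals
    simp [PM, kron_mul_kron, σx_mul_σx, σz_mul_σz, σx_mul_σz_mul_σy, σz_mul_σx_mul_σy,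
      kron_neg_left, kron_neg_right, kron_smul_smul, kron_one_one]
end

section
/- For every function a : ZMod 5 → ℤ taking values in {−1, 1}, the KCBS cyclic correlation sum satisfies ∑_{i ∈ ZMod 5} a i * a (i+1) ≥ −3. This is the noncontextual hidden-variable bound of the KCBS inequality. -/
/-!
Each correlation `a i * a (i + 1)` is `±1`, and their product over the cycle is
`(∏ i, a i) ^ 2 = 1`. On a cycle of odd length the correlations therefore cannot all be `-1`,
so at least one of them is `1` and the sum is at least `1 - (n - 1) = 2 - n`, which is `-3`
for the pentagon.
-/

open Finset

theorem prod_mul_add_eq_one {G M : Type*} [AddGroup G] [Fintype G] [CommMonoid M] {f : G → M}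
    (hf : ∀ i, f i ^ 2 = 1) (c : G) : ∏ i, f i * f (i + c) = 1 := by
  have hshift : ∏ i, f (i + c) = ∏ i, f i := Equiv.prod_comp (Equiv.addRight c) f
  rw [prod_mul_distrib, hshift, ← sq, ← prod_pow]
  exact prod_eq_one fun i _ => hf i

theorem exists_eq_one_of_prod_eq_one {ι : Type*} [Fintype ι] (hι : Odd (Fintype.card ι))
    {b : ι → ℤ} (hb : ∀ i, b i = 1 ∨ b i = -1) (hprod : ∏ i, b i = 1) : ∃ j, b j = 1 := by
  by_contra! h
  have hneg : ∀ i, b i = -1 := fun i => (hb i).resolve_left (h i)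
  simp only [hneg, prod_const, card_univ, hι.neg_one_pow] at hprod
  norm_num at hprod

theorem two_sub_card_le_sum {ι : Type*} [Fintype ι] {b : ι → ℤ} (hb : ∀ i, -1 ≤ b i) {j : ι}
    (hj : b j = 1) : 2 - (Fintype.card ι : ℤ) ≤ ∑ i, b i := by
  have h := single_le_sum (f := fun i => b i + 1) (fun i _ => by linarith [hb i]) (mem_univ j)
  simp only [sum_add_distrib, sum_const, card_univ, hj, nsmul_eq_mul, mul_one] at h
  linarith

theorem two_sub_le_sum_mul_add_one {n : ℕ} [NeZero n] (hn : Odd n) {a : ZMod n → ℤ}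
    (ha : ∀ i, a i = 1 ∨ a i = -1) : 2 - (n : ℤ) ≤ ∑ i, a i * a (i + 1) := by
  have hsq : ∀ i, a i ^ 2 = 1 := fun i => by rcases ha i with h | h <;> simp [h]
  have hcorr : ∀ i, a i * a (i + 1) = 1 ∨ a i * a (i + 1) = -1 := fun i => by
    rcases ha i with h | h <;> rcases ha (i + 1) with h' | h' <;> simp [h, h']
  obtain ⟨j, hj⟩ :=
    exists_eq_one_of_prod_eq_one (by rwa [ZMod.card]) hcorr (prod_mul_add_eq_one hsq 1)
  have hge : ∀ i, -1 ≤ a i * a (i + 1) := fun i => by rcases hcorr i with h | h <;> omega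
  simpa only [ZMod.card] using two_sub_card_le_sum hge hj

/-- The noncontextual hidden-variable bound of the KCBS inequality: for any
±1-valued assignment to the five cyclically indexed observables, the cyclic
correlation sum is at least −3. -/
theorem kcbs_noncontextual_bound
    (a : ZMod 5 → ℤ) (ha : ∀ i, a i = 1 ∨ a i = -1) :
    -3 ≤ ∑ i : ZMod 5, a i * a (i + 1) := by
  exact le_trans (by norm_num) (two_sub_le_sum_mul_add_one (n := 5) (by decide) ha)
end

section
/- The KCBS vectors v_j are unit vectors in ℝ³, adjacent vectors are orthogonal (⟨v_j, v_{j+1}⟩ = 0 for every j ∈ ZMod 5), and the sum of the squared overlaps with e₃ = (0,0,1) equals √5: ∑_{j ∈ ZMod 5} ⟨e₃, v_j⟩² = 5·cos(π/5)/(1 + cos(π/5)) = √5. -/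
/-!
The vectors lie on the cone of half-angle θ around e₃, at azimuths `4πj/5`, so
`⟨v_i, v_j⟩ = sin²θ · cos(φ_i - φ_j) + cos²θ`. Adjacent azimuths differ by `4π/5` modulo `2π`,
and `cos(4π/5) = -cos(π/5)`; θ is chosen exactly so that `cos²θ = cos(π/5) · sin²θ`. Every
overlap with e₃ is `cos²θ`, and `5 cos(π/5)/(1 + cos(π/5)) = √5` follows from
`cos(π/5) = (1 + √5)/4`.
-/

open Real

/-- The polar angle θ ∈ [0, π/2] of the KCBS vectors, determined by
cos²θ = cos(π/5)/(1 + cos(π/5)). -/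
noncomputable def kcbsθ : ℝ := arccos (Real.sqrt (cos (π / 5) / (1 + cos (π / 5))))

/-- The KCBS vectors in ℝ³. -/
noncomputable def kcbsV (j : ZMod 5) : Fin 3 → ℝ :=
  ![sin kcbsθ * cos (4 * π * (j.val : ℝ) / 5),
    sin kcbsθ * sin (4 * π * (j.val : ℝ) / 5),
    cos kcbsθ]

/-- The Euclidean inner product on ℝ³. -/
def dot3 (u v : Fin 3 → ℝ) : ℝ := ∑ k : Fin 3, u k * v k

/-- The third standard basis vector e₃ = (0,0,1). -/
def e3 : Fin 3 → ℝ := ![0, 0, 1]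

lemma dot3_cone (s c a b : ℝ) :
    dot3 ![s * cos a, s * sin a, c] ![s * cos b, s * sin b, c] = s ^ 2 * cos (a - b) + c ^ 2 := by
  simp only [dot3, Fin.sum_univ_three, Matrix.cons_val_zero, Matrix.cons_val_one,
    Matrix.cons_val_two, Matrix.head_cons, Matrix.tail_cons, cos_sub]
  ring

lemma e3_dot3 (v : Fin 3 → ℝ) : dot3 e3 v = v 2 := by
  simp [dot3, e3, Fin.sum_univ_three]

lemma cos_pi_div_five_pos : 0 < cos (π / 5) := by
  rw [cos_pi_div_five]
  positivity

lemma cos_sq_kcbsθ : cos kcbsθ ^ 2 = cos (π / 5) / (1 + cos (π / 5)) := by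
  have hc := cos_pi_div_five_pos
  have hx : cos (π / 5) / (1 + cos (π / 5)) ≤ 1 := by
    rw [div_le_one (by linarith)]
    linarith
  rw [kcbsθ, cos_arccos (by linarith [sqrt_nonneg (cos (π / 5) / (1 + cos (π / 5)))])
    (sqrt_le_one.mpr hx), sq_sqrt (by positivity)]

lemma sin_sq_kcbsθ : sin kcbsθ ^ 2 = 1 / (1 + cos (π / 5)) := by
  have hc := cos_pi_div_five_pos
  rw [sin_sq, cos_sq_kcbsθ]
  field_simp
  ring

-- `(j + 1).val = j.val + 1` fails at the wrap-around `4 ↦ 0`, hence the detour through `mod 5`.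
lemma cos_kcbs_azimuth_sub_succ (j : ZMod 5) :
    cos (4 * π * (j.val : ℝ) / 5 - 4 * π * ((j + 1).val : ℝ) / 5) = -cos (π / 5) := by
  obtain ⟨k, hk⟩ : ((5 : ℕ) : ℤ) ∣ ((j + 1).val : ℤ) - (j.val + 1) :=
    (ZMod.intCast_eq_intCast_iff_dvd_sub _ _ 5).mp (by simp)
  have hk' : ((j + 1).val : ℝ) = j.val + 1 + 5 * k := by
    rw [sub_eq_iff_eq_add'] at hk
    exact_mod_cast hk
  rw [hk', show 4 * π * (j.val : ℝ) / 5 - 4 * π * (j.val + 1 + 5 * k) / 5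
      = -(π - π / 5) + (-2 * k : ℤ) * (2 * π) by push_cast; ring,
    cos_add_int_mul_two_pi, cos_neg, cos_pi_sub]

lemma five_mul_cos_pi_div_five_div : 5 * cos (π / 5) / (1 + cos (π / 5)) = √5 := by
  have h5 : √5 ^ 2 = 5 := sq_sqrt (by norm_num)
  rw [cos_pi_div_five, div_eq_iff (by positivity)]
  linear_combination (-1 / 4 : ℝ) * h5

/-- The KCBS vectors are unit vectors, adjacent vectors are orthogonal, and
the sum of squared overlaps with e₃ equals 5·cos(π/5)/(1 + cos(π/5)) = √5. -/
theorem kcbs_vectors :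
    (∀ j : ZMod 5, dot3 (kcbsV j) (kcbsV j) = 1) ∧
    (∀ j : ZMod 5, dot3 (kcbsV j) (kcbsV (j + 1)) = 0) ∧
    (∑ j : ZMod 5, (dot3 e3 (kcbsV j)) ^ 2 = 5 * cos (π / 5) / (1 + cos (π / 5))) ∧
    (5 * cos (π / 5) / (1 + cos (π / 5)) = Real.sqrt 5) := by
  refine ⟨fun j => ?_, fun j => ?_, ?_, five_mul_cos_pi_div_five_div⟩
  · rw [kcbsV, dot3_cone, sub_self, cos_zero, mul_one, sin_sq_add_cos_sq]
  · have hc := cos_pi_div_five_pos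
    rw [kcbsV, kcbsV, dot3_cone, cos_kcbs_azimuth_sub_succ, sin_sq_kcbsθ, cos_sq_kcbsθ]
    field_simp
    ring
  · simp only [e3_dot3, kcbsV, Matrix.cons_val_two, Matrix.tail_cons, Matrix.head_cons,
      cos_sq_kcbsθ, Finset.sum_const, Finset.card_univ, ZMod.card, nsmul_eq_mul]
    push_cast
    ring
end

section
/- Let G be a finite simple graph with vertex set V and let a : V → ℤ take values in {0, 1}. Then ∑_{i ∈ V} a i − ∑_{{i,j} ∈ E(G)} a i * a j ≤ α(G), where α(G) is the independence number of G and the second sum ranges over the edges of G. (This is the deterministic hidden-variable bound for Cabello's two-point-correlation form S = ∑_i P(1|i) − ∑_{(i,j)∈E} P(1,1|i,j) of any noncontextuality inequality.) -/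
/-! A {0,1}-assignment is the indicator of a vertex set `S`, and the form evaluates to
`|S| - e(G[S])`. Deleting one endpoint of every edge inside `S` removes at most `e(G[S])`
vertices and leaves an independent set, so `|S| ≤ α(G) + e(G[S])`. -/

/-- A set of vertices is independent if no two of its elements are adjacent. -/
def IsIndepSet {V : Type*} (G : SimpleGraph V) (s : Set V) : Prop :=
  s.Pairwise fun a b => ¬ G.Adj a b

/-- The independence number of a finite simple graph: the maximum cardinality
of a set of pairwise non-adjacent vertices. -/
noncomputable def indepNum {V : Type*} [Fintype V] (G : SimpleGraph V) : ℕ :=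
  sSup {n | ∃ s : Finset V, IsIndepSet G ↑s ∧ s.card = n}

section

open Finset

variable {V : Type*} (G : SimpleGraph V)

theorem card_le_indepNum [Fintype V] {s : Finset V} (hs : IsIndepSet G s) :
    s.card ≤ indepNum G := by
  refine le_csSup ⟨Fintype.card V, ?_⟩ ⟨s, hs, rfl⟩
  rintro _ ⟨t, -, rfl⟩
  exact card_le_univ t

theorem isIndepSet_sdiff_image_out_fst [DecidableEq V] [Fintype G.edgeSet] (s : Finset V) :
    IsIndepSet G ↑(s \ (G.edgeFinset ∩ s.sym2).image fun e => e.out.1) := by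
  intro x hx y hy _ hxy
  simp only [coe_sdiff, Set.mem_sdiff, mem_coe, mem_image, not_exists, not_and] at hx hy
  have hedge : s(x, y) ∈ G.edgeFinset ∩ s.sym2 := by
    simp [hxy, hx.1, hy.1]
  rcases Sym2.mem_iff.mp (Sym2.out_fst_mem s(x, y)) with h | h
  · exact hx.2 _ hedge h
  · exact hy.2 _ hedge h

theorem card_sub_card_edges_le_indepNum [Fintype V] [DecidableEq V] [Fintype G.edgeSet]
    (s : Finset V) :
    (s.card : ℤ) - (G.edgeFinset ∩ s.sym2).card ≤ indepNum G := by
  set T := (G.edgeFinset ∩ s.sym2).image fun e => e.out.1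
  have hT : T.card ≤ (G.edgeFinset ∩ s.sym2).card := card_image_le
  have hsdiff : (s \ T).card ≤ indepNum G :=
    card_le_indepNum G (isIndepSet_sdiff_image_out_fst G s)
  have hs : s.card ≤ (s \ T).card + T.card := card_le_card_sdiff_add_card
  omega

theorem sum_lift_indicator_mul_eq_card_inter_sym2 {R : Type*} [CommSemiring R]
    [DecidableEq V] (E : Finset (Sym2 V)) (S : Finset V) :
    ∑ e ∈ E, Sym2.lift ⟨fun i j => (if i ∈ S then (1 : R) else 0) * (if j ∈ S then 1 else 0),
        fun _ _ => mul_comm _ _⟩ e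
      = ((E ∩ S.sym2).card : R) := by
  rw [← filter_mem_eq_inter, card_filter, Nat.cast_sum]
  refine sum_congr rfl fun e _ => ?_
  induction e using Sym2.ind with
  | _ i j => by_cases hi : i ∈ S <;> by_cases hj : j ∈ S <;> simp [hi, hj]

end

theorem cabello_two_point_bound_general {V : Type*} [Fintype V]
    (G : SimpleGraph V) [DecidableRel G.Adj]
    (a : V → ℤ) (ha : ∀ i, a i = 0 ∨ a i = 1) :
    (∑ i : V, a i)
      - ∑ e ∈ G.edgeFinset,
          Sym2.lift ⟨fun i j => a i * a j, fun i j => mul_comm (a i) (a j)⟩ e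
      ≤ (indepNum G : ℤ) := by
  classical
  obtain ⟨S, rfl⟩ : ∃ S : Finset V, a = fun i => if i ∈ S then 1 else 0 :=
    ⟨Finset.univ.filter (a · = 1), funext fun i => by rcases ha i with h | h <;> simp [h]⟩
  rw [sum_lift_indicator_mul_eq_card_inter_sym2, Finset.sum_boole, Finset.filter_mem_eq_inter,
    Finset.univ_inter]
  exact card_sub_card_edges_le_indepNum G S

/-- Deterministic hidden-variable bound for Cabello's two-point-correlation
form of a noncontextuality inequality: for any {0,1}-valued assignment `a`,
∑_i a i − ∑_{{i,j} ∈ E(G)} a i · a j ≤ α(G). -/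
theorem cabello_two_point_bound {V : Type*} [Fintype V] [DecidableEq V]
    (G : SimpleGraph V) [DecidableRel G.Adj]
    (a : V → ℤ) (ha : ∀ i, a i = 0 ∨ a i = 1) :
    (∑ i : V, a i)
      - ∑ e ∈ G.edgeFinset,
          Sym2.lift ⟨fun i j => a i * a j, fun i j => mul_comm (a i) (a j)⟩ e
      ≤ (indepNum G : ℤ) :=
  cabello_two_point_bound_general G a ha
end

section
/- Let η ∈ ℝ with 0 ≤ η. All eight matrices G(x₁,x₂,x₃) = (1/8)·(I + η·(x₁ σx + x₂ σy + x₃ σz)), for (x₁,x₂,x₃) ∈ {−1,1}³, are positive semidefinite if and only if η ≤ 1/√3. (This is the joint-measurability threshold for the three unsharp Pauli observables E(x_i) = (1/2)(I + η x_i σ_i): they admit a mother POVM precisely when η ∈ [0, 1/√3].) -/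
open Matrix
open scoped ComplexOrder

/-- The candidate mother POVM element
G(x₁,x₂,x₃) = (1/8)(I + η(x₁σx + x₂σy + x₃σz)). -/
noncomputable def motherG (η : ℝ) (x₁ x₂ x₃ : ℤ) : Matrix (Fin 2) (Fin 2) ℂ :=
  ((8 : ℂ)⁻¹) • (1 + (η : ℂ) • ((x₁ : ℂ) • σx + (x₂ : ℂ) • σy + (x₃ : ℂ) • σz))

/-! A 2×2 Hermitian matrix is positive semidefinite iff its trace and determinant are nonnegative,
being the sum and product of its two real eigenvalues. For a ∈ ℝ³ the matrix I + a·σ has trace 2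
and determinant 1 - |a|², so G(x) = (1/8)(I + ηx·σ) is positive semidefinite iff η²|x|² ≤ 1,
and |x|² = 3 for every sign vector x ∈ {±1}³. -/

theorem nonneg_and_nonneg_iff_add_nonneg_and_mul_nonneg {α : Type*} [Ring α] [LinearOrder α]
    [IsStrictOrderedRing α] {a b : α} : 0 ≤ a ∧ 0 ≤ b ↔ 0 ≤ a + b ∧ 0 ≤ a * b := by
  refine ⟨fun ⟨ha, hb⟩ ↦ ⟨add_nonneg ha hb, mul_nonneg ha hb⟩, fun ⟨hs, hp⟩ ↦ ?_⟩
  rcases mul_nonneg_iff.mp hp with h | ⟨ha, hb⟩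
  · exact h
  · exact ⟨hs.trans (add_le_of_nonpos_right hb), hs.trans (add_le_of_nonpos_left ha)⟩

namespace Matrix

variable {𝕜 : Type*} [RCLike 𝕜]

theorem IsHermitian.posSemidef_iff_trace_nonneg_and_det_nonneg {A : Matrix (Fin 2) (Fin 2) 𝕜}
    (hA : A.IsHermitian) : A.PosSemidef ↔ 0 ≤ A.trace ∧ 0 ≤ A.det := by
  rw [hA.posSemidef_iff_eigenvalues_nonneg, hA.trace_eq_sum_eigenvalues,
    hA.det_eq_prod_eigenvalues, Fin.sum_univ_two, Fin.prod_univ_two, ← RCLike.ofReal_add,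
    ← RCLike.ofReal_mul, RCLike.ofReal_nonneg, RCLike.ofReal_nonneg, Pi.le_def,
    Fin.forall_fin_two]
  exact nonneg_and_nonneg_iff_add_nonneg_and_mul_nonneg

theorem posSemidef_smul_iff {n : Type*} [Fintype n] {A : Matrix n n 𝕜} {c : 𝕜} (hc : 0 < c) :
    (c • A).PosSemidef ↔ A.PosSemidef := by
  refine ⟨fun h ↦ ?_, fun h ↦ h.smul hc.le⟩
  simpa [smul_smul, inv_mul_cancel₀ hc.ne'] using h.smul (inv_pos.mpr hc).le

end Matrix

def blochMatrix (a b c : ℝ) : Matrix (Fin 2) (Fin 2) ℂ :=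
  1 + (a : ℂ) • σx + (b : ℂ) • σy + (c : ℂ) • σz

theorem blochMatrix_eq (a b c : ℝ) :
    blochMatrix a b c = !![1 + (c : ℂ), a - b * Complex.I; a + b * Complex.I, 1 - c] := by
  ext i j
  fin_cases i <;> fin_cases j <;> simp [blochMatrix, σx, σy, σz] <;> ring

theorem isHermitian_blochMatrix (a b c : ℝ) : (blochMatrix a b c).IsHermitian := by
  rw [blochMatrix_eq]
  ext i j
  fin_cases i <;> fin_cases j <;> simp [Complex.ext_iff]

theorem trace_blochMatrix (a b c : ℝ) : (blochMatrix a b c).trace = 2 := by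
  rw [blochMatrix_eq, trace_fin_two_of]
  ring

theorem det_blochMatrix (a b c : ℝ) :
    (blochMatrix a b c).det = ((1 - (a ^ 2 + b ^ 2 + c ^ 2) : ℝ) : ℂ) := by
  rw [blochMatrix_eq, det_fin_two_of]
  push_cast
  linear_combination (b : ℂ) ^ 2 * Complex.I_sq

theorem posSemidef_blochMatrix_iff (a b c : ℝ) :
    (blochMatrix a b c).PosSemidef ↔ a ^ 2 + b ^ 2 + c ^ 2 ≤ 1 := by
  rw [(isHermitian_blochMatrix a b c).posSemidef_iff_trace_nonneg_and_det_nonneg,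
    trace_blochMatrix, det_blochMatrix, Complex.zero_le_real, sub_nonneg]
  simp

theorem motherG_eq_smul_blochMatrix (η : ℝ) (x₁ x₂ x₃ : ℤ) :
    motherG η x₁ x₂ x₃ = (8 : ℂ)⁻¹ • blochMatrix (η * x₁) (η * x₂) (η * x₃) := by
  simp only [motherG, blochMatrix, smul_add, smul_smul, add_assoc]
  push_cast
  rfl

theorem posSemidef_motherG_iff (η : ℝ) (x₁ x₂ x₃ : ℤ) :
    (motherG η x₁ x₂ x₃).PosSemidef ↔ η ^ 2 * (x₁ ^ 2 + x₂ ^ 2 + x₃ ^ 2 : ℝ) ≤ 1 := by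
  rw [motherG_eq_smul_blochMatrix, posSemidef_smul_iff (by norm_num), posSemidef_blochMatrix_iff]
  ring_nf

/-- Joint-measurability threshold for the three unsharp Pauli observables:
for 0 ≤ η, all eight mother POVM elements G(x₁,x₂,x₃), (x₁,x₂,x₃) ∈ {±1}³,
are positive semidefinite iff η ≤ 1/√3. -/
theorem mother_povm_positive_iff (η : ℝ) (hη : 0 ≤ η) :
    (∀ x₁ x₂ x₃ : ℤ, (x₁ = -1 ∨ x₁ = 1) → (x₂ = -1 ∨ x₂ = 1) →
        (x₃ = -1 ∨ x₃ = 1) → (motherG η x₁ x₂ x₃).PosSemidef)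
      ↔ η ≤ 1 / Real.sqrt 3 := by
  have threshold : η ≤ 1 / Real.sqrt 3 ↔ η ^ 2 * 3 ≤ 1 := by
    rw [one_div, ← Real.sqrt_inv, Real.le_sqrt hη (by norm_num), ← one_div, le_div_iff₀ three_pos]
  have at_signs {x₁ x₂ x₃ : ℤ} (h₁ : x₁ = -1 ∨ x₁ = 1) (h₂ : x₂ = -1 ∨ x₂ = 1)
      (h₃ : x₃ = -1 ∨ x₃ = 1) : (motherG η x₁ x₂ x₃).PosSemidef ↔ η ^ 2 * 3 ≤ 1 := by
    rw [posSemidef_motherG_iff]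
    rcases h₁ with rfl | rfl <;> rcases h₂ with rfl | rfl <;> rcases h₃ with rfl | rfl <;> norm_num
  rw [threshold]
  constructor
  · intro h
    exact (at_signs (.inr rfl) (.inr rfl) (.inr rfl)).mp (h 1 1 1 (.inr rfl) (.inr rfl) (.inr rfl))
  · exact fun h _ _ _ h₁ h₂ h₃ ↦ (at_signs h₁ h₂ h₃).mpr h
end
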